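/- There exists a universal constant C > 0 with the following property: for every measurable function V : ℝ³ → [0,∞) with α(V) := sup_{x∈ℝ³} |x|²V(x) + ∫_{ℝ³} V(x)/|x| dx < ∞, and for every x ∈ ℝ³ with x ≠ 0, one has ∫_{ℝ³} V(y)/|x−y|² dy ≤ C · α(V)/|x|. -/

import Mathlib

noncomputable section
open MeasureTheory
open scoped ENNReal

abbrev E3 := EuclideanSpace ℝ (Fin 3)

open Metric

lemma finrank_E3 : Module.finrank ℝ E3 = 3 := by simp

lemma lintegral_closedBall_inv_sq (x : E3) {r : ℝ} (hr : 0 < r) :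
    ∫⁻ y in closedBall x r, ENNReal.ofReal (1 / ‖x - y‖ ^ 2)
      ≤ volume (closedBall (0:E3) 1) * ENNReal.ofReal (8 * r) := by
  classical
  set B := volume (closedBall (0:E3) (1:ℝ)) with hB
  set f : E3 → ℝ≥0∞ := fun y => ENNReal.ofReal (1 / ‖x - y‖ ^ 2) with hf
  set A : ℕ → Set E3 := fun k => closedBall x ((1/2)^k * r) \ ball x ((1/2)^(k+1) * r) with hA
  have hcover : closedBall x r \ {x} ⊆ ⋃ k, A k := by
    intro y hy
    obtain ⟨hy1, hy2⟩ := hy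
    have hyx : y ≠ x := by simpa using hy2
    have hd : 0 < dist y x := dist_pos.2 hyx
    have hdr : dist y x ≤ r := mem_closedBall.1 hy1
    have hex : ∃ n : ℕ, (1/2:ℝ)^n * r < dist y x := by
      obtain ⟨n, hn⟩ := exists_pow_lt_of_lt_one (div_pos hd hr) (by norm_num : (1/2:ℝ) < 1)
      exact ⟨n, by rwa [← lt_div_iff₀ hr]⟩
    set n := Nat.find hex with hn'
    have hn : (1/2:ℝ)^n * r < dist y x := Nat.find_spec hex
    have hn0 : n ≠ 0 := by
      intro h
      rw [h] at hn
      simp at hn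
      linarith
    obtain ⟨k, hk'⟩ := Nat.exists_eq_succ_of_ne_zero hn0
    have hk : ¬ ((1/2:ℝ)^k * r < dist y x) := Nat.find_min hex (by omega)
    refine Set.mem_iUnion.2 ⟨k, ?_, ?_⟩
    · exact mem_closedBall.2 (not_lt.1 hk)
    · intro hmem
      rw [mem_ball] at hmem
      rw [hk'] at hn
      exact absurd hmem (not_lt.2 hn.le)
  have hbound : ∀ k : ℕ, ∀ y ∈ A k, f y ≤ ENNReal.ofReal (4^(k+1) / r^2) := by
    intro k y hy
    have h1 : (1/2:ℝ)^(k+1) * r ≤ dist y x := by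
      have := hy.2
      rw [mem_ball] at this
      exact not_lt.1 this
    have hpos : (0:ℝ) < (1/2:ℝ)^(k+1) * r := by positivity
    have hxy : ‖x - y‖ = dist y x := by rw [norm_sub_rev, ← dist_eq_norm]
    apply ENNReal.ofReal_le_ofReal
    rw [hxy]
    have h2 : ((1/2:ℝ)^(k+1) * r)^2 ≤ (dist y x)^2 := by
      apply pow_le_pow_left₀ hpos.le h1
    have h3 : 1 / (dist y x)^2 ≤ 1 / ((1/2:ℝ)^(k+1) * r)^2 :=
      one_div_le_one_div_of_le (by positivity) h2
    calc 1 / (dist y x)^2 ≤ 1 / ((1/2:ℝ)^(k+1) * r)^2 := h3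
      _ = 4^(k+1) / r^2 := by
          have h4 : ((2:ℝ)^(k+1))^2 = 4^(k+1) := by
            rw [← pow_mul, mul_comm, pow_mul]; norm_num
          field_simp
          rw [← h4, ← mul_pow, ← mul_pow]; norm_num
  have hvol : ∀ k : ℕ, volume (A k) ≤ ENNReal.ofReal (((1/2:ℝ))^k * r)^3 * B := by
    intro k
    calc volume (A k) ≤ volume (closedBall x ((1/2)^k * r)) := measure_mono Set.diff_subset
      _ = ENNReal.ofReal (((1/2)^k * r) ^ Module.finrank ℝ E3) * B := by
          rw [Measure.addHaar_closedBall' volume x (by positivity)]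
      _ = ENNReal.ofReal (((1/2:ℝ))^k * r)^3 * B := by
          rw [finrank_E3, ENNReal.ofReal_pow (by positivity)]
  have hterm : ∀ k : ℕ, ∫⁻ y in A k, f y ≤ ENNReal.ofReal (4 * r) * B * (2⁻¹:ℝ≥0∞)^k := by
    intro k
    calc ∫⁻ y in A k, f y ≤ ∫⁻ _ in A k, ENNReal.ofReal (4^(k+1) / r^2) :=
          setLIntegral_mono (by measurability) (hbound k)
      _ = ENNReal.ofReal (4^(k+1) / r^2) * volume (A k) := by
          rw [setLIntegral_const]
      _ ≤ ENNReal.ofReal (4^(k+1) / r^2) * (ENNReal.ofReal (((1/2:ℝ))^k * r)^3 * B) := by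
          gcongr
          exact hvol k
      _ = ENNReal.ofReal (4 * r) * B * (2⁻¹:ℝ≥0∞)^k := by
          rw [← ENNReal.ofReal_pow (by positivity), ← mul_assoc, ← ENNReal.ofReal_mul (by positivity)]
          have : (4:ℝ)^(k+1) / r^2 * ((1/2)^k * r)^3 = (4*r) * (1/2)^k := by
            have h8 : ((1/2:ℝ)^k)^3 = (1/8)^k := by
              rw [← pow_mul, mul_comm, pow_mul]; norm_num
            have key : (4:ℝ)^(k+1) * (1/8:ℝ)^k = 4 * (1/2)^k := by
              rw [pow_succ, mul_comm ((4:ℝ)^k) 4, mul_assoc, ← mul_pow]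
              norm_num
            have expand : (((1/2:ℝ))^k*r)^3 = (1/8)^k * r^3 := by rw [mul_pow, h8]
            calc (4:ℝ)^(k+1)/r^2 * ((1/2)^k*r)^3
                = (4^(k+1) * (1/8)^k) * r^3 / r^2 := by rw [expand]; ring
              _ = 4*(1/2)^k * r^3/r^2 := by rw [key]
              _ = (4*r)*(1/2)^k := by
                  rw [pow_succ r 2]
                  field_simp
          rw [this, ENNReal.ofReal_mul (by positivity)]
          have hhalf : ENNReal.ofReal ((1/2:ℝ)^k) = (2⁻¹:ℝ≥0∞)^k := by
            rw [ENNReal.ofReal_pow (by norm_num)]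
            congr 1
            rw [ENNReal.ofReal_div_of_pos (by norm_num)]
            simp
          rw [hhalf]
          ring
  have hsum : ∑' k : ℕ, ENNReal.ofReal (4 * r) * B * (2⁻¹:ℝ≥0∞)^k
      = B * ENNReal.ofReal (8 * r) := by
    rw [ENNReal.tsum_mul_left, ENNReal.tsum_geometric]
    have h2 : ((1:ℝ≥0∞) - 2⁻¹)⁻¹ = 2 := by
      rw [ENNReal.one_sub_inv_two]
      simp
    rw [h2]
    rw [mul_comm (ENNReal.ofReal (4*r)) B, mul_assoc]
    congr 1
    rw [← ENNReal.ofReal_ofNat 2, ← ENNReal.ofReal_mul (by positivity)]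
    norm_num
    ring_nf
    rw [ENNReal.ofReal_mul' (by norm_num), ENNReal.ofReal_ofNat]
  calc ∫⁻ y in closedBall x r, f y = ∫⁻ y in closedBall x r \ {x}, f y := by
        refine (setLIntegral_congr ?_).symm
        exact diff_ae_eq_self.2 (measure_inter_null_of_null_right _ (measure_singleton x))
    _ ≤ ∫⁻ y in ⋃ k, A k, f y := lintegral_mono_set hcover
    _ ≤ ∑' k : ℕ, ∫⁻ y in A k, f y := lintegral_iUnion_le _ _
    _ ≤ ∑' k : ℕ, ENNReal.ofReal (4 * r) * B * (2⁻¹:ℝ≥0∞)^k := ENNReal.tsum_le_tsum hterm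
    _ = B * ENNReal.ofReal (8 * r) := hsum


/-- There is a universal constant `C > 0` such that for every nonnegative measurable
potential `V` on ℝ³ with `α = sup_x |x|²V(x) + ∫ V(x)/|x| dx < ∞`, one has
`∫ V(y)/|x-y|² dy ≤ C α / |x|` for every `x ≠ 0`. -/
theorem inverse_square_potential_bound :
    ∃ C : ℝ, 0 < C ∧
      ∀ V : E3 → ℝ, Measurable V → (∀ x : E3, 0 ≤ V x) →
      ∀ α : ℝ≥0∞,
        α = (⨆ x : E3, ENNReal.ofReal (‖x‖^2 * V x))
            + ∫⁻ x : E3, ENNReal.ofReal (V x / ‖x‖) →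
        α < ⊤ →
        ∀ x : E3, x ≠ 0 →
          ∫⁻ y : E3, ENNReal.ofReal (V y / ‖x - y‖^2)
            ≤ ENNReal.ofReal C * α / ENNReal.ofReal ‖x‖ := by
  classical
  set B := volume (closedBall (0:E3) (1:ℝ)) with hB
  have hBfin : B ≠ ⊤ := measure_closedBall_lt_top.ne
  have hBt : (0:ℝ) ≤ B.toReal := ENNReal.toReal_nonneg
  refine ⟨16 * B.toReal + 8, by positivity, ?_⟩
  intro V hV hV0 α hα hαfin x hx
  set a := ‖x‖ with ha
  have ha0 : 0 < a := norm_pos_iff.2 hx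
  set r := a/2 with hrdef
  have hr : 0 < r := by positivity
  set A₁ := ⨆ y : E3, ENNReal.ofReal (‖y‖^2 * V y) with hA1
  set A₂ := ∫⁻ y : E3, ENNReal.ofReal (V y / ‖y‖) with hA2
  have mf : Measurable fun y : E3 => ENNReal.ofReal (V y / ‖x - y‖^2) := by
    apply Measurable.ennreal_ofReal
    exact hV.div (((measurable_id.const_sub x).norm).pow_const 2)
  have mg : Measurable fun y : E3 => ENNReal.ofReal (V y / ‖y‖) := by
    apply Measurable.ennreal_ofReal
    exact hV.div measurable_norm
  have hae : ∀ᵐ y : E3, y ≠ 0 := by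
    refine ae_iff.2 ?_
    simp only [ne_eq, not_not, Set.setOf_eq_eq_singleton]
    exact measure_singleton 0
  -- pointwise bound off the ball
  have hpt : ∀ y : E3, y ≠ 0 →
      ENNReal.ofReal (V y / ‖x - y‖^2)
        ≤ (Metric.ball x r).indicator (fun y => ENNReal.ofReal (V y / ‖x - y‖^2)) y
          + ENNReal.ofReal (8 / a) * ENNReal.ofReal (V y / ‖y‖) := by
    intro y hy
    by_cases hmem : y ∈ Metric.ball x r
    · rw [Set.indicator_of_mem hmem]
      exact le_self_add
    · rw [Set.indicator_of_notMem hmem]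
      have hb : 0 < ‖y‖ := norm_pos_iff.2 hy
      have hd : r ≤ ‖x - y‖ := by
        rw [Metric.mem_ball, not_lt, dist_eq_norm] at hmem
        rwa [norm_sub_rev]
      have htri : ‖y‖ - a ≤ ‖x - y‖ := by
        have h := norm_sub_norm_le y x
        rw [norm_sub_rev (y) x] at h
        exact h
      have key : V y / ‖x - y‖^2 ≤ 8 / a * (V y / ‖y‖) := by
        set d := ‖x - y‖ with hdd
        have hd0 : 0 < d := lt_of_lt_of_le hr hd
        have hab : a * ‖y‖ ≤ 8 * d^2 := by
          rcases le_or_gt ‖y‖ (2*a) with hcase | hcase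
          · nlinarith
          · nlinarith
        rw [div_mul_div_comm, div_le_div_iff₀ (by positivity) (by positivity)]
        calc V y * (a * ‖y‖) ≤ V y * (8 * d^2) := by
              exact mul_le_mul_of_nonneg_left hab (hV0 y)
          _ = 8 * V y * d^2 := by ring
      calc ENNReal.ofReal (V y / ‖x - y‖^2)
          ≤ ENNReal.ofReal (8 / a * (V y / ‖y‖)) := ENNReal.ofReal_le_ofReal key
        _ = ENNReal.ofReal (8 / a) * ENNReal.ofReal (V y / ‖y‖) :=
            ENNReal.ofReal_mul (by positivity)
        _ ≤ _ := le_add_self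
  -- ball piece
  have hball : ∫⁻ y in Metric.ball x r, ENNReal.ofReal (V y / ‖x - y‖^2)
      ≤ ENNReal.ofReal (4 / a^2) * A₁ * (B * ENNReal.ofReal (8 * r)) := by
    have hptb : ∀ y ∈ Metric.ball x r,
        ENNReal.ofReal (V y / ‖x - y‖^2)
          ≤ (ENNReal.ofReal (4 / a^2) * A₁) * ENNReal.ofReal (1 / ‖x - y‖^2) := by
      intro y hmem
      rw [Metric.mem_ball, dist_eq_norm] at hmem
      have hyn : a / 2 ≤ ‖y‖ := by
        have h := norm_sub_norm_le x y
        have h2 : ‖x - y‖ < r := by rwa [norm_sub_rev]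
        rw [hrdef] at h2
        linarith
      have hVy : V y ≤ 4 / a^2 * (‖y‖^2 * V y) := by
        have h1 : (1:ℝ) ≤ 4 / a^2 * ‖y‖^2 := by
          rw [div_mul_eq_mul_div, le_div_iff₀ (by positivity)]
          nlinarith
        calc V y = 1 * V y := (one_mul _).symm
          _ ≤ (4 / a^2 * ‖y‖^2) * V y := mul_le_mul_of_nonneg_right h1 (hV0 y)
          _ = 4 / a^2 * (‖y‖^2 * V y) := by ring
      calc ENNReal.ofReal (V y / ‖x - y‖^2)
          = ENNReal.ofReal (V y) * ENNReal.ofReal (1 / ‖x - y‖^2) := by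
            rw [← ENNReal.ofReal_mul (hV0 y)]
            congr 1
            ring
        _ ≤ (ENNReal.ofReal (4 / a^2) * A₁) * ENNReal.ofReal (1 / ‖x - y‖^2) := by
            gcongr
            calc ENNReal.ofReal (V y) ≤ ENNReal.ofReal (4 / a^2 * (‖y‖^2 * V y)) :=
                  ENNReal.ofReal_le_ofReal hVy
              _ = ENNReal.ofReal (4 / a^2) * ENNReal.ofReal (‖y‖^2 * V y) :=
                  ENNReal.ofReal_mul (by positivity)
              _ ≤ ENNReal.ofReal (4 / a^2) * A₁ := by
                  gcongr
                  exact le_iSup (fun z : E3 => ENNReal.ofReal (‖z‖^2 * V z)) y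
    have minv : Measurable fun y : E3 => ENNReal.ofReal (1 / ‖x - y‖^2) := by
      apply Measurable.ennreal_ofReal
      exact measurable_const.div (((measurable_id.const_sub x).norm).pow_const 2)
    calc ∫⁻ y in Metric.ball x r, ENNReal.ofReal (V y / ‖x - y‖^2)
        ≤ ∫⁻ y in Metric.ball x r,
            (ENNReal.ofReal (4 / a^2) * A₁) * ENNReal.ofReal (1 / ‖x - y‖^2) :=
          setLIntegral_mono (by exact (minv.const_mul _)) hptb
      _ = (ENNReal.ofReal (4 / a^2) * A₁) *
            ∫⁻ y in Metric.ball x r, ENNReal.ofReal (1 / ‖x - y‖^2) :=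
          lintegral_const_mul _ minv
      _ ≤ ENNReal.ofReal (4 / a^2) * A₁ * (B * ENNReal.ofReal (8 * r)) := by
          gcongr
          calc ∫⁻ y in Metric.ball x r, ENNReal.ofReal (1 / ‖x - y‖^2)
              ≤ ∫⁻ y in closedBall x r, ENNReal.ofReal (1 / ‖x - y‖^2) :=
                lintegral_mono_set Metric.ball_subset_closedBall
            _ ≤ B * ENNReal.ofReal (8 * r) := lintegral_closedBall_inv_sq x hr
  -- assemble
  have hsplit : ∫⁻ y : E3, ENNReal.ofReal (V y / ‖x - y‖^2)
      ≤ (∫⁻ y in Metric.ball x r, ENNReal.ofReal (V y / ‖x - y‖^2))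
        + ENNReal.ofReal (8 / a) * A₂ := by
    calc ∫⁻ y : E3, ENNReal.ofReal (V y / ‖x - y‖^2)
        ≤ ∫⁻ y : E3, ((Metric.ball x r).indicator
              (fun y => ENNReal.ofReal (V y / ‖x - y‖^2)) y
            + ENNReal.ofReal (8 / a) * ENNReal.ofReal (V y / ‖y‖)) :=
          lintegral_mono_ae (hae.mono fun y hy => hpt y hy)
      _ = (∫⁻ y : E3, (Metric.ball x r).indicator
              (fun y => ENNReal.ofReal (V y / ‖x - y‖^2)) y)
          + ∫⁻ y : E3, ENNReal.ofReal (8 / a) * ENNReal.ofReal (V y / ‖y‖) :=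
          lintegral_add_left (mf.indicator measurableSet_ball) _
      _ = (∫⁻ y in Metric.ball x r, ENNReal.ofReal (V y / ‖x - y‖^2))
          + ENNReal.ofReal (8 / a) * A₂ := by
          rw [lintegral_indicator measurableSet_ball, lintegral_const_mul _ mg]
  -- final numeric bound
  set c : ℝ≥0∞ := (ENNReal.ofReal a)⁻¹ with hc
  have hfirst : ENNReal.ofReal (4 / a^2) * A₁ * (B * ENNReal.ofReal (8 * r))
      ≤ ENNReal.ofReal (16 * B.toReal + 8) * c * A₁ := by
    have h8r : (8:ℝ) * r = 4 * a := by rw [hrdef]; ring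
    have hcomb : ENNReal.ofReal (4 / a^2) * ENNReal.ofReal (8 * r)
        = ENNReal.ofReal 16 * c := by
      rw [h8r, ← ENNReal.ofReal_mul (by positivity)]
      have : 4 / a^2 * (4 * a) = 16 * a⁻¹ := by field_simp; ring
      rw [this, ENNReal.ofReal_mul (by norm_num), ENNReal.ofReal_inv_of_pos ha0]
    calc ENNReal.ofReal (4 / a^2) * A₁ * (B * ENNReal.ofReal (8 * r))
        = (ENNReal.ofReal (4 / a^2) * ENNReal.ofReal (8 * r)) * B * A₁ := by ring
      _ = ENNReal.ofReal 16 * c * B * A₁ := by rw [hcomb]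
      _ = ENNReal.ofReal 16 * ENNReal.ofReal B.toReal * c * A₁ := by
          rw [ENNReal.ofReal_toReal hBfin]; ring
      _ = ENNReal.ofReal (16 * B.toReal) * c * A₁ := by
          rw [ENNReal.ofReal_mul (by norm_num)]
      _ ≤ ENNReal.ofReal (16 * B.toReal + 8) * c * A₁ := by
          gcongr
          linarith
  have hsecond : ENNReal.ofReal (8 / a) * A₂
      ≤ ENNReal.ofReal (16 * B.toReal + 8) * c * A₂ := by
    have : ENNReal.ofReal (8 / a) = ENNReal.ofReal 8 * c := by
      rw [div_eq_mul_inv, ENNReal.ofReal_mul (by norm_num), ENNReal.ofReal_inv_of_pos ha0]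
    rw [this]
    have h16 : ENNReal.ofReal (8:ℝ) ≤ ENNReal.ofReal (16 * B.toReal + 8) :=
      ENNReal.ofReal_le_ofReal (by linarith)
    exact mul_le_mul' (mul_le_mul' h16 le_rfl) le_rfl
  calc ∫⁻ y : E3, ENNReal.ofReal (V y / ‖x - y‖^2)
      ≤ (∫⁻ y in Metric.ball x r, ENNReal.ofReal (V y / ‖x - y‖^2))
        + ENNReal.ofReal (8 / a) * A₂ := hsplit
    _ ≤ ENNReal.ofReal (4 / a^2) * A₁ * (B * ENNReal.ofReal (8 * r))
        + ENNReal.ofReal (8 / a) * A₂ := add_le_add_left hball _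
    _ ≤ ENNReal.ofReal (16 * B.toReal + 8) * c * A₁
        + ENNReal.ofReal (16 * B.toReal + 8) * c * A₂ := add_le_add hfirst hsecond
    _ = ENNReal.ofReal (16 * B.toReal + 8) * c * (A₁ + A₂) := by ring
    _ = ENNReal.ofReal (16 * B.toReal + 8) * α / ENNReal.ofReal a := by
        rw [hα, div_eq_mul_inv]
        ring
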